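/- Let ρ₁ ≥ ρ₂ ≥ ρ₃ ≥ ω with ρ₃ regular, and ρ₃ ≥ ρ₄ ≥ 2. Then either cf(cov(ρ₁, ρ₂, ρ₃, ρ₄)) < ρ₄ or cf(cov(ρ₁, ρ₂, ρ₃, ρ₄)) ≥ ρ₃. -/

import Mathlib

open Cardinal

noncomputable section

/-- The covering number `cov(ρ₁, ρ₂, ρ₃, ρ₄)`: least cardinality of `X ⊆ P_{ρ₂}(ρ₁)`
such that every `b ∈ P_{ρ₃}(ρ₁)` is covered by the union of fewer than `ρ₄` members of `X`. -/
def cov (r1 r2 r3 r4 : Cardinal) : Cardinal :=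
  sInf { c | ∃ X : Set (Set r1.out),
    (∀ x ∈ X, #x < r2) ∧
    (∀ b : Set r1.out, #b < r3 → ∃ Q : Set (Set r1.out), Q ⊆ X ∧ #Q < r4 ∧ b ⊆ ⋃₀ Q) ∧
    #X = c }

/-- The meeting number `m(ρ, λ)`. -/
def meet (ρ lam : Cardinal) : Cardinal :=
  sInf { c | ∃ Q : Set (Set lam.out),
    (∀ q ∈ Q, #q = ρ) ∧
    (∀ b : Set lam.out, #b = ρ → ∃ q ∈ Q, #(↥(b ∩ q)) = ρ) ∧
    #Q = c }

/-- The density number `d(ρ, λ)`. -/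
def dens (ρ lam : Cardinal) : Cardinal :=
  sInf { c | ∃ Q : Set (Set lam.out),
    (∀ q ∈ Q, #q = ρ) ∧
    (∀ b : Set lam.out, #b = ρ → ∃ q ∈ Q, q ⊆ b) ∧
    #Q = c }

/-- `ds(f)` for `f : λ → ρ`. -/
def ds (ρ lam : Cardinal) (f : lam.out → ρ.out) : Cardinal :=
  sInf { c | ∃ Z : Set (Set lam.out),
    (∀ z ∈ Z, #z = ρ) ∧
    (∀ B : Set lam.out, (∀ α : ρ.out, #(↥(B ∩ f ⁻¹' {α})) = lam) →
      ∃ z ∈ Z, #(↥(f '' (z ∩ B))) = ρ) ∧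
    #Z = c }

/-- The Džamonja–Shelah number `DS(ρ, λ) = sup { ds(f) : f : λ → ρ }`. -/
def DS (ρ lam : Cardinal) : Cardinal := ⨆ f : lam.out → ρ.out, ds ρ lam f

/-- Cofinality of a cardinal. -/
def cf (c : Cardinal) : Cardinal := c.ord.cof

/-- `u(σ, λ) = cov(λ, σ, σ, ω)`. -/
def u (σ lam : Cardinal) : Cardinal := cov lam σ σ ℵ₀

/-- The `o`-th iterated cardinal successor of `c`. -/
def succIter (c : Cardinal) (o : Ordinal) : Cardinal :=
  Cardinal.preAleph (Cardinal.preAleph.symm c + o)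

universe u

def Covers {α : Type*} (r3 r4 : Cardinal) (X : Set (Set α)) : Prop :=
  ∀ b : Set α, #b < r3 → ∃ Q ⊆ X, #Q < r4 ∧ b ⊆ ⋃₀ Q

def IsCovFamily {α : Type*} (r2 r3 r4 : Cardinal) (X : Set (Set α)) : Prop :=
  (∀ x ∈ X, #x < r2) ∧ Covers r3 r4 X

theorem cov_le_mk {r1 r2 r3 r4 : Cardinal} {X : Set (Set r1.out)} (hX : IsCovFamily r2 r3 r4 X) :
    cov r1 r2 r3 r4 ≤ #X :=
  csInf_le' ⟨X, hX.1, hX.2, rfl⟩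

theorem exists_isCovFamily_mk_eq_cov {r1 r2 r3 r4 : Cardinal} (h : cov r1 r2 r3 r4 ≠ 0) :
    ∃ X : Set (Set r1.out), IsCovFamily r2 r3 r4 X ∧ #X = cov r1 r2 r3 r4 := by
  have hne : Set.Nonempty
      {c | ∃ X : Set (Set r1.out), (∀ x ∈ X, #x < r2) ∧ Covers r3 r4 X ∧ #X = c} :=
    Set.nonempty_iff_ne_empty.2 fun he => h <| (congrArg sInf he).trans Cardinal.sInf_empty
  obtain ⟨X, hsmall, hcov, hX⟩ := csInf_mem hne
  exact ⟨X, ⟨hsmall, hcov⟩, hX⟩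

theorem exists_mem_forall_lt_of_mk_lt_cof {ι : Type*} [LinearOrder ι] {S J : Set ι}
    (hS : IsCofinal S) (hJ : #J < Order.cof ι) : ∃ i ∈ S, ∀ j ∈ J, j < i := by
  have hJ' : ¬ IsCofinal J := fun hJc => (Order.cof_le hJc).not_gt hJ
  obtain ⟨a, ha⟩ : ∃ a, ∀ j ∈ J, j < a := by
    simpa [IsCofinal] using hJ'
  obtain ⟨i, hiS, hai⟩ := hS a
  exact ⟨i, hiS, fun j hj => (ha j hj).trans_le hai⟩

/-- If no initial segment covers, pick a witness `b i` against each one; the union of the `b i`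
along a cofinal set of size `cof ι < r3` still has size `< r3` by regularity, and the fewer than
`r4 ≤ cof ι` members of the family covering it all occur before some index of that cofinal set.
Applied to a covering family of size `cov` enumerated in order type `cov`, this contradicts
minimality. -/
theorem Covers.exists_image_Iio {α ι : Type u} [LinearOrder ι] {r3 r4 : Cardinal}
    (hr3 : r3.IsRegular) (hr4 : r4 ≤ Order.cof ι) (hcof : Order.cof ι < r3) {g : ι → Set α}
    (hg : Function.Injective g) (hX : Covers r3 r4 (Set.range g)) :
    ∃ i, Covers r3 r4 (g '' Set.Iio i) := by
  by_contra! hfail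
  simp only [Covers, not_forall, not_exists, not_and] at hfail
  choose b hb hbQ using hfail
  obtain ⟨S, hS, hScard⟩ := Order.exists_cof_eq ι
  have hB : #(⋃ i : S, b i) < r3 :=
    (card_iUnion_lt_iff_forall_of_isRegular hr3 (hScard ▸ hcof)).2 fun i => hb i
  obtain ⟨Q, hQX, hQ, hBQ⟩ := hX _ hB
  have hJ : #(g ⁻¹' Q) < Order.cof ι :=
    ((mk_preimage_of_injective g Q hg).trans_lt hQ).trans_le hr4
  obtain ⟨i, hiS, hJi⟩ := exists_mem_forall_lt_of_mk_lt_cof hS hJ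
  have hQi : Q ⊆ g '' Set.Iio i := fun q hq => by
    obtain ⟨j, rfl⟩ := hQX hq
    exact ⟨j, hJi j hq, rfl⟩
  exact hbQ i Q hQi hQ ((Set.subset_iUnion (fun i : S => b i) ⟨i, hiS⟩).trans hBQ)

theorem stmt15_general (r1 r2 r3 r4 : Cardinal)
    (h3 : ℵ₀ ≤ r3) (hreg : cf r3 = r3) (h4 : 2 ≤ r4) :
    cf (cov r1 r2 r3 r4) < r4 ∨ r3 ≤ cf (cov r1 r2 r3 r4) := by
  by_contra! ⟨hge, hlt⟩
  set κ := cov r1 r2 r3 r4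
  have hκ : κ ≠ 0 := fun h => by
    simp only [cf, h, ord_zero, Ordinal.cof_zero] at hge
    exact absurd (h4.trans hge) (by norm_num)
  obtain ⟨X, ⟨hXsmall, hXcov⟩, hXκ⟩ := exists_isCovFamily_mk_eq_cov hκ
  obtain ⟨e⟩ : Nonempty (κ.ord.ToType ≃ X) := Cardinal.eq.1 (by rw [mk_ord_toType, hXκ])
  set g : κ.ord.ToType → Set r1.out := Subtype.val ∘ e
  have hrange : Set.range g = X := by
    rw [Set.range_comp, e.range_eq_univ, Set.image_univ, Subtype.range_coe]
  have hcof : Order.cof κ.ord.ToType = cf κ := Ordinal.cof_toType _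
  obtain ⟨i, hi⟩ := Covers.exists_image_Iio ⟨h3, hreg.ge⟩ (hcof ▸ hge) (hcof ▸ hlt)
    (Subtype.val_injective.comp e.injective) (by rwa [hrange])
  have hle : κ ≤ #(g '' Set.Iio i) :=
    cov_le_mk ⟨by rintro _ ⟨j, -, rfl⟩; exact hXsmall _ (e j).2, hi⟩
  have hIio : #(Set.Iio i) < #κ.ord.ToType :=
    mk_Iio_lt i (by rw [mk_ord_toType, Ordinal.type_toType])
  rw [mk_ord_toType] at hIio
  exact hle.not_gt (mk_image_le.trans_lt hIio)

theorem stmt15 (r1 r2 r3 r4 : Cardinal) (h12 : r2 ≤ r1) (h23 : r3 ≤ r2)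
    (h3 : ℵ₀ ≤ r3) (hreg : cf r3 = r3) (h34 : r4 ≤ r3) (h4 : 2 ≤ r4) :
    cf (cov r1 r2 r3 r4) < r4 ∨ r3 ≤ cf (cov r1 r2 r3 r4) :=
  stmt15_general r1 r2 r3 r4 h3 hreg h4
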